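/- arXiv:1608.01532 — 4 statements merged into one kernel-verified Lean document; each statement's English description precedes it below -/
import Mathlib

section
/- For a connected weighted graph with Laplacian L = D − A, degree vector d, and m = ι_n'd, the generalized inverse L* := D^{−1/2}(D^{−1/2} L D^{−1/2})† D^{−1/2} satisfies L* L = I_n − m^{−1} ι_n d'. -/
/-!
Write `S = D^{-1/2} L D^{-1/2}` and `v = D^{1/2} ι`. Since `2 yᵀ L y = Σᵢⱼ Aᵢⱼ (yᵢ - yⱼ)²`,
`S` is symmetric positive semidefinite, and by connectivity its kernel is the line spanned by `v`.
With `P = vvᵀ / m` the orthogonal projection onto that line, `S + P` is therefore invertible and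
`S† = (S + P)⁻¹ - P` satisfies the Penrose conditions, so `S† S = I - P`. Conjugating back,
`L* L = D^{-1/2} (I - P) D^{1/2} = I - m⁻¹ ι d'`.
-/

open Matrix BigOperators

open Classical in
/-- Moore–Penrose pseudoinverse of a real matrix (defined via the four Penrose conditions,
which determine it uniquely; it always exists for real matrices). -/
noncomputable def mpinv {m n : ℕ} (M : Matrix (Fin m) (Fin n) ℝ) : Matrix (Fin n) (Fin m) ℝ :=
  if h : ∃ N : Matrix (Fin n) (Fin m) ℝ,
      M * N * M = M ∧ N * M * N = N ∧ (M * N)ᵀ = M * N ∧ (N * M)ᵀ = N * M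
  then h.choose else 0

/-- The diagonal matrix `D^{-1/2}` for `D = diag d`. -/
noncomputable def dhalfInv {n : ℕ} (d : Fin n → ℝ) : Matrix (Fin n) (Fin n) ℝ :=
  Matrix.diagonal fun i => 1 / Real.sqrt (d i)

/-- The generalized inverse `M* = D^{-1/2} (D^{-1/2} M D^{-1/2})† D^{-1/2}`. -/
noncomputable def gstar {n : ℕ} (d : Fin n → ℝ) (M : Matrix (Fin n) (Fin n) ℝ) :
    Matrix (Fin n) (Fin n) ℝ :=
  dhalfInv d * mpinv (dhalfInv d * M * dhalfInv d) * dhalfInv d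

/-- Connectivity of the weighted graph with adjacency matrix `A`. -/
def Conn {n : ℕ} (A : Matrix (Fin n) (Fin n) ℝ) : Prop :=
  ∀ i j : Fin n, Relation.ReflTransGen (fun a b => A a b ≠ 0) i j

section Penrose

variable {ι κ R : Type*} [Fintype ι] [Fintype κ] [CommRing R]

def IsPenroseInverse (M : Matrix ι κ R) (N : Matrix κ ι R) : Prop :=
  M * N * M = M ∧ N * M * N = N ∧ (M * N)ᵀ = M * N ∧ (N * M)ᵀ = N * M

theorem IsPenroseInverse.mul_right_eq {M : Matrix ι κ R} {N₁ N₂ : Matrix κ ι R}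
    (h₁ : IsPenroseInverse M N₁) (h₂ : IsPenroseInverse M N₂) : N₁ * M = N₂ * M :=
  calc N₁ * M = (M * N₂ * M)ᵀ * N₁ᵀ := by rw [h₂.1, ← transpose_mul, h₁.2.2.2]
    _ = (N₂ * M)ᵀ * (N₁ * M)ᵀ := by simp only [transpose_mul, Matrix.mul_assoc]
    _ = N₂ * M := by
        rw [h₁.2.2.2, h₂.2.2.2, Matrix.mul_assoc, ← Matrix.mul_assoc M, h₁.1]

theorem IsPenroseInverse.mul_left_eq {M : Matrix ι κ R} {N₁ N₂ : Matrix κ ι R}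
    (h₁ : IsPenroseInverse M N₁) (h₂ : IsPenroseInverse M N₂) : M * N₁ = M * N₂ :=
  calc M * N₁ = N₁ᵀ * (M * N₂ * M)ᵀ := by rw [h₂.1, ← transpose_mul, h₁.2.2.1]
    _ = (M * N₁)ᵀ * (M * N₂)ᵀ := by simp only [transpose_mul, Matrix.mul_assoc]
    _ = M * N₂ := by rw [h₁.2.2.1, h₂.2.2.1, ← Matrix.mul_assoc, h₁.1]

theorem IsPenroseInverse.unique {M : Matrix ι κ R} {N₁ N₂ : Matrix κ ι R}
    (h₁ : IsPenroseInverse M N₁) (h₂ : IsPenroseInverse M N₂) : N₁ = N₂ :=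
  calc N₁ = N₁ * (M * N₁) := by rw [← Matrix.mul_assoc, h₁.2.1]
    _ = N₂ * M * N₂ := by rw [h₁.mul_left_eq h₂, ← Matrix.mul_assoc, h₁.mul_right_eq h₂]
    _ = N₂ := h₂.2.1

end Penrose

theorem mpinv_eq_of_isPenroseInverse {m n : ℕ} {M : Matrix (Fin m) (Fin n) ℝ}
    {N : Matrix (Fin n) (Fin m) ℝ} (h : IsPenroseInverse M N) : mpinv M = N := by
  have hex : ∃ N, IsPenroseInverse M N := ⟨N, h⟩
  rw [mpinv]
  exact (dif_pos hex).trans (hex.choose_spec.unique h)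

section InvAddProjection

variable {ι R : Type*} [Fintype ι] [CommRing R] {S P : Matrix ι ι R}

theorem mul_eq_zero_of_transpose_eq (hS : Sᵀ = S) (hP : Pᵀ = P) (hSP : S * P = 0) :
    P * S = 0 := by
  rw [← hS, ← hP, ← transpose_mul, hSP, transpose_zero]

variable [DecidableEq ι]

theorem inv_add_mul_of_mul_eq_zero (hPP : P * P = P) (hSP : S * P = 0)
    (h : IsUnit (S + P).det) : (S + P)⁻¹ * P = P :=
  calc (S + P)⁻¹ * P = (S + P)⁻¹ * ((S + P) * P) := by
        rw [Matrix.add_mul, hSP, hPP, zero_add]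
    _ = P := nonsing_inv_mul_cancel_left _ _ h

theorem mul_inv_add_of_mul_eq_zero (hPP : P * P = P) (hPS : P * S = 0)
    (h : IsUnit (S + P).det) : P * (S + P)⁻¹ = P :=
  calc P * (S + P)⁻¹ = P * (S + P) * (S + P)⁻¹ := by
        rw [Matrix.mul_add, hPS, hPP, zero_add]
    _ = P := mul_nonsing_inv_cancel_right _ _ h

theorem inv_add_sub_mul_self (hPP : P * P = P) (hSP : S * P = 0) (hPS : P * S = 0)
    (h : IsUnit (S + P).det) : ((S + P)⁻¹ - P) * S = 1 - P := by
  rw [Matrix.sub_mul, hPS, sub_zero, ← add_sub_cancel_right S P, Matrix.mul_sub,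
    add_sub_cancel_right, nonsing_inv_mul _ h, inv_add_mul_of_mul_eq_zero hPP hSP h]

theorem mul_inv_add_sub (hPP : P * P = P) (hSP : S * P = 0) (hPS : P * S = 0)
    (h : IsUnit (S + P).det) : S * ((S + P)⁻¹ - P) = 1 - P := by
  rw [Matrix.mul_sub, hSP, sub_zero, ← add_sub_cancel_right S P, Matrix.sub_mul,
    add_sub_cancel_right, mul_nonsing_inv _ h, mul_inv_add_of_mul_eq_zero hPP hPS h]

theorem isPenroseInverse_inv_add_sub (hS : Sᵀ = S) (hP : Pᵀ = P) (hPP : P * P = P)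
    (hSP : S * P = 0) (h : IsUnit (S + P).det) : IsPenroseInverse S ((S + P)⁻¹ - P) := by
  have hPS := mul_eq_zero_of_transpose_eq hS hP hSP
  have hleft := inv_add_sub_mul_self hPP hSP hPS h
  have hright := mul_inv_add_sub hPP hSP hPS h
  refine ⟨?_, ?_, ?_, ?_⟩
  · rw [hright, Matrix.sub_mul, Matrix.one_mul, hPS, sub_zero]
  · rw [hleft, Matrix.sub_mul, Matrix.one_mul, Matrix.mul_sub,
      mul_inv_add_of_mul_eq_zero hPP hPS h, hPP, sub_self, sub_zero]
  · rw [hright, transpose_sub, transpose_one, hP]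
  · rw [hleft, transpose_sub, transpose_one, hP]

end InvAddProjection

section Laplacian

variable {ι : Type*} [Fintype ι] [DecidableEq ι] {A : Matrix ι ι ℝ} {d : ι → ℝ}

theorem laplacian_mulVec_one (hdeg : ∀ i, d i = ∑ j, A i j) :
    (diagonal d - A) *ᵥ (fun _ => (1 : ℝ)) = 0 := by
  ext i
  rw [sub_mulVec, Pi.sub_apply, mulVec_diagonal]
  simp [mulVec, dotProduct, hdeg]

theorem two_mul_dotProduct_laplacian_mulVec (hsym : Aᵀ = A) (hdeg : ∀ i, d i = ∑ j, A i j)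
    (y : ι → ℝ) :
    2 * (y ⬝ᵥ (diagonal d - A) *ᵥ y) = ∑ i, ∑ j, A i j * (y i - y j) ^ 2 := by
  have hrow : ∑ i, ∑ j, A i j * y i ^ 2 = ∑ i, d i * y i ^ 2 := by
    simp only [← Finset.sum_mul, hdeg]
  have hcol : ∑ i, ∑ j, A i j * y j ^ 2 = ∑ i, d i * y i ^ 2 := by
    have hA : ∀ i j, A j i = A i j := fun i j => congrFun (congrFun hsym i) j
    rw [Finset.sum_comm, ← hrow]
    simp only [hA]
  have hquad : y ⬝ᵥ (diagonal d - A) *ᵥ y =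
      ∑ i, d i * y i ^ 2 - ∑ i, ∑ j, A i j * (y i * y j) := by
    rw [sub_mulVec, dotProduct_sub]
    simp only [dotProduct, mulVec_diagonal]
    simp only [mulVec, dotProduct, Finset.mul_sum]
    congr 1 <;> refine Finset.sum_congr rfl fun i _ => ?_
    · ring
    · exact Finset.sum_congr rfl fun j _ => by ring
  have hexpand : ∀ i j, A i j * (y i - y j) ^ 2 =
      A i j * y i ^ 2 + A i j * y j ^ 2 - 2 * (A i j * (y i * y j)) := fun i j => by ring
  simp only [hexpand, Finset.sum_add_distrib, Finset.sum_sub_distrib, ← Finset.mul_sum, hrow,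
    hcol, hquad]
  ring

theorem dotProduct_laplacian_mulVec_nonneg (hsym : Aᵀ = A) (hnn : ∀ i j, 0 ≤ A i j)
    (hdeg : ∀ i, d i = ∑ j, A i j) (y : ι → ℝ) : 0 ≤ y ⬝ᵥ (diagonal d - A) *ᵥ y := by
  have h := two_mul_dotProduct_laplacian_mulVec hsym hdeg y
  have : 0 ≤ ∑ i, ∑ j, A i j * (y i - y j) ^ 2 :=
    Finset.sum_nonneg fun i _ => Finset.sum_nonneg fun j _ => mul_nonneg (hnn i j) (sq_nonneg _)
  linarith

end Laplacian

theorem Conn.eq_of_dotProduct_laplacian_mulVec_eq_zero {n : ℕ} {A : Matrix (Fin n) (Fin n) ℝ}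
    {d : Fin n → ℝ} (hconn : Conn A) (hsym : Aᵀ = A) (hnn : ∀ i j, 0 ≤ A i j)
    (hdeg : ∀ i, d i = ∑ j, A i j) {y : Fin n → ℝ} (hy : y ⬝ᵥ (diagonal d - A) *ᵥ y = 0)
    (i j : Fin n) : y i = y j := by
  have hterm : ∀ k l, A k l * (y k - y l) ^ 2 = 0 := by
    have hsum := two_mul_dotProduct_laplacian_mulVec hsym hdeg y
    rw [hy, mul_zero, eq_comm, Fintype.sum_eq_zero_iff_of_nonneg fun k =>
      Finset.sum_nonneg fun l _ => mul_nonneg (hnn k l) (sq_nonneg _)] at hsum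
    intro k l
    exact congrFun ((Fintype.sum_eq_zero_iff_of_nonneg fun l =>
      mul_nonneg (hnn k l) (sq_nonneg _)).mp (congrFun hsum k)) l
  induction hconn i j with
  | refl => rfl
  | tail _ hA ih =>
    exact ih.trans (sub_eq_zero.mp (pow_eq_zero_iff two_ne_zero |>.mp
      ((mul_eq_zero.mp (hterm _ _)).resolve_left hA)))

section LineProjection

variable {ι K : Type*} [Fintype ι] [Field K]

def lineProj (v : ι → K) : Matrix ι ι K := (v ⬝ᵥ v)⁻¹ • vecMulVec v v

theorem transpose_lineProj (v : ι → K) : (lineProj v)ᵀ = lineProj v := by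
  rw [lineProj, transpose_smul, transpose_vecMulVec]

theorem lineProj_mul_self (v : ι → K) : lineProj v * lineProj v = lineProj v := by
  rw [lineProj, smul_mul_smul_comm, vecMulVec_mul_vecMulVec, vecMulVec_smul, smul_smul,
    mul_right_comm]
  congr 1
  simpa using mul_inv_mul_cancel (v ⬝ᵥ v)⁻¹

theorem mul_lineProj_of_mulVec_eq_zero {S : Matrix ι ι K} {v : ι → K} (h : S *ᵥ v = 0) :
    S * lineProj v = 0 := by
  rw [lineProj, Matrix.mul_smul, mul_vecMulVec, h, zero_vecMulVec, smul_zero]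

theorem dotProduct_lineProj_mulVec (v x : ι → K) :
    x ⬝ᵥ lineProj v *ᵥ x = (v ⬝ᵥ v)⁻¹ * (v ⬝ᵥ x) ^ 2 := by
  rw [lineProj, smul_mulVec, vecMulVec_mulVec, op_smul_eq_smul, dotProduct_smul,
    dotProduct_smul, smul_eq_mul, smul_eq_mul, dotProduct_comm x v]
  ring

end LineProjection

section Normalized

variable {n : ℕ} {A : Matrix (Fin n) (Fin n) ℝ} {d : Fin n → ℝ}

noncomputable def normalizedLaplacian (A : Matrix (Fin n) (Fin n) ℝ) (d : Fin n → ℝ) :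
    Matrix (Fin n) (Fin n) ℝ :=
  dhalfInv d * (diagonal d - A) * dhalfInv d

theorem transpose_dhalfInv (d : Fin n → ℝ) : (dhalfInv d)ᵀ = dhalfInv d :=
  diagonal_transpose _

theorem transpose_normalizedLaplacian (hsym : Aᵀ = A) :
    (normalizedLaplacian A d)ᵀ = normalizedLaplacian A d := by
  rw [normalizedLaplacian, transpose_mul, transpose_mul, transpose_dhalfInv, transpose_sub,
    diagonal_transpose, hsym, Matrix.mul_assoc]

theorem dhalfInv_mul_diagonal_sqrt (hd : ∀ i, 0 < d i) :
    dhalfInv d * diagonal (fun i => √(d i)) = 1 := by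
  rw [dhalfInv, diagonal_mul_diagonal, ← diagonal_one]
  exact congrArg diagonal (funext fun i => one_div_mul_cancel (Real.sqrt_pos.mpr (hd i)).ne')

theorem dhalfInv_mulVec_sqrt (hd : ∀ i, 0 < d i) :
    dhalfInv d *ᵥ (fun i => √(d i)) = fun _ => 1 := by
  ext i
  rw [dhalfInv, mulVec_diagonal]
  exact one_div_mul_cancel (Real.sqrt_pos.mpr (hd i)).ne'

theorem gstar_mul_self (hd : ∀ i, 0 < d i) (M : Matrix (Fin n) (Fin n) ℝ) :
    gstar d M * M = dhalfInv d *
      (mpinv (dhalfInv d * M * dhalfInv d) * (dhalfInv d * M * dhalfInv d)) *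
        diagonal (fun i => √(d i)) := by
  simp only [gstar, Matrix.mul_assoc, dhalfInv_mul_diagonal_sqrt hd, Matrix.mul_one]

theorem sqrt_dotProduct_sqrt (hd : ∀ i, 0 < d i) :
    (fun i => √(d i)) ⬝ᵥ (fun i => √(d i)) = ∑ i, d i :=
  Finset.sum_congr rfl fun i _ => Real.mul_self_sqrt (hd i).le

theorem dhalfInv_mul_lineProj_sqrt_mul_diagonal_sqrt (hd : ∀ i, 0 < d i) :
    dhalfInv d * lineProj (fun i => √(d i)) * diagonal (fun i => √(d i)) =
      (∑ i, d i)⁻¹ • vecMulVec (fun _ => 1) d := by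
  rw [lineProj, sqrt_dotProduct_sqrt hd, Matrix.mul_smul, Matrix.smul_mul, mul_vecMulVec,
    vecMulVec_mul, dhalfInv_mulVec_sqrt hd]
  congr 2
  ext i
  rw [vecMul_diagonal, Real.mul_self_sqrt (hd i).le]

theorem normalizedLaplacian_mulVec_sqrt (hdeg : ∀ i, d i = ∑ j, A i j) (hd : ∀ i, 0 < d i) :
    normalizedLaplacian A d *ᵥ (fun i => √(d i)) = 0 := by
  rw [normalizedLaplacian, ← mulVec_mulVec, dhalfInv_mulVec_sqrt hd, ← mulVec_mulVec,
    laplacian_mulVec_one hdeg, mulVec_zero]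

theorem dotProduct_normalizedLaplacian_mulVec (x : Fin n → ℝ) :
    x ⬝ᵥ normalizedLaplacian A d *ᵥ x =
      (dhalfInv d *ᵥ x) ⬝ᵥ (diagonal d - A) *ᵥ (dhalfInv d *ᵥ x) := by
  have h : x ᵥ* dhalfInv d = dhalfInv d *ᵥ x := by
    rw [← vecMul_transpose, transpose_dhalfInv]
  rw [normalizedLaplacian, ← mulVec_mulVec, ← mulVec_mulVec, dotProduct_mulVec x (dhalfInv d),
    h]

theorem Conn.eq_zero_of_dotProduct_normalizedLaplacian_mulVec_eq_zero (hconn : Conn A)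
    (hsym : Aᵀ = A) (hnn : ∀ i j, 0 ≤ A i j) (hdeg : ∀ i, d i = ∑ j, A i j)
    (hd : ∀ i, 0 < d i) {x : Fin n → ℝ} (hx : x ⬝ᵥ normalizedLaplacian A d *ᵥ x = 0)
    (hxv : (fun i => √(d i)) ⬝ᵥ x = 0) : x = 0 := by
  set y := dhalfInv d *ᵥ x
  have hconst : ∀ i j, y i = y j :=
    hconn.eq_of_dotProduct_laplacian_mulVec_eq_zero hsym hnn hdeg
      (by rwa [← dotProduct_normalizedLaplacian_mulVec])
  have hxy : ∀ i, x i = √(d i) * y i := fun i => by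
    rw [show y i = _ from mulVec_diagonal _ x i]
    field_simp [(Real.sqrt_pos.mpr (hd i)).ne']
  ext i
  have hm : 0 < ∑ j, d j := Finset.sum_pos (fun j _ => hd j) ⟨i, Finset.mem_univ i⟩
  have hmy : (∑ j, d j) * y i = 0 := by
    rw [← hxv, dotProduct, Finset.sum_mul]
    refine Finset.sum_congr rfl fun j _ => ?_
    rw [hxy j, ← mul_assoc, Real.mul_self_sqrt (hd j).le, hconst i j]
  rw [hxy i, (mul_eq_zero.mp hmy).resolve_left hm.ne', mul_zero, Pi.zero_apply]

theorem Conn.isUnit_det_normalizedLaplacian_add_lineProj (hconn : Conn A) (hsym : Aᵀ = A)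
    (hnn : ∀ i j, 0 ≤ A i j) (hdeg : ∀ i, d i = ∑ j, A i j) (hd : ∀ i, 0 < d i) :
    IsUnit (normalizedLaplacian A d + lineProj fun i => √(d i)).det := by
  set v : Fin n → ℝ := fun i => √(d i)
  rw [isUnit_iff_ne_zero, Ne, ← exists_mulVec_eq_zero_iff]
  rintro ⟨x, hx0, hx⟩
  have hS : 0 ≤ x ⬝ᵥ normalizedLaplacian A d *ᵥ x := by
    rw [dotProduct_normalizedLaplacian_mulVec]
    exact dotProduct_laplacian_mulVec_nonneg hsym hnn hdeg _
  have hvv : 0 < v ⬝ᵥ v := by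
    obtain ⟨i, -⟩ := Function.ne_iff.mp hx0
    rw [sqrt_dotProduct_sqrt hd]
    exact Finset.sum_pos (fun j _ => hd j) ⟨i, Finset.mem_univ i⟩
  have hP : 0 ≤ (v ⬝ᵥ v)⁻¹ * (v ⬝ᵥ x) ^ 2 := by positivity
  have hsum : x ⬝ᵥ normalizedLaplacian A d *ᵥ x + (v ⬝ᵥ v)⁻¹ * (v ⬝ᵥ x) ^ 2 = 0 := by
    rw [← dotProduct_lineProj_mulVec, ← dotProduct_add, ← add_mulVec, hx, dotProduct_zero]
  refine hx0 (hconn.eq_zero_of_dotProduct_normalizedLaplacian_mulVec_eq_zero hsym hnn hdeg hd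
    (by linarith) ?_)
  have : (v ⬝ᵥ v)⁻¹ * (v ⬝ᵥ x) ^ 2 = 0 := by linarith
  simpa [hvv.ne'] using this

end Normalized

theorem stmt7_general {n : ℕ} (A : Matrix (Fin n) (Fin n) ℝ) (hsym : Aᵀ = A)
    (hnn : ∀ i j, 0 ≤ A i j) (d : Fin n → ℝ) (hdeg : ∀ i, d i = ∑ j, A i j) (hdpos : ∀ i, 0 < d i)
    (hconn : Conn A) :
    gstar d (Matrix.diagonal d - A) * (Matrix.diagonal d - A) =
      1 - (∑ i, d i)⁻¹ • vecMulVec (fun _ => (1 : ℝ)) d := by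
  set S := normalizedLaplacian A d
  set P := lineProj fun i => √(d i)
  have hS : Sᵀ = S := transpose_normalizedLaplacian hsym
  have hP : Pᵀ = P := transpose_lineProj _
  have hPP : P * P = P := lineProj_mul_self _
  have hSP : S * P = 0 :=
    mul_lineProj_of_mulVec_eq_zero (normalizedLaplacian_mulVec_sqrt hdeg hdpos)
  have hunit : IsUnit (S + P).det :=
    hconn.isUnit_det_normalizedLaplacian_add_lineProj hsym hnn hdeg hdpos
  have hpinv : mpinv S * S = 1 - P := by
    rw [mpinv_eq_of_isPenroseInverse (isPenroseInverse_inv_add_sub hS hP hPP hSP hunit),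
      inv_add_sub_mul_self hPP hSP (mul_eq_zero_of_transpose_eq hS hP hSP) hunit]
  calc gstar d (diagonal d - A) * (diagonal d - A)
      = dhalfInv d * (mpinv S * S) * diagonal (fun i => √(d i)) := gstar_mul_self hdpos _
    _ = 1 - dhalfInv d * P * diagonal (fun i => √(d i)) := by
        rw [hpinv, Matrix.mul_sub, Matrix.sub_mul, Matrix.mul_one,
          dhalfInv_mul_diagonal_sqrt hdpos]
    _ = 1 - (∑ i, d i)⁻¹ • vecMulVec (fun _ => 1) d := by
        rw [dhalfInv_mul_lineProj_sqrt_mul_diagonal_sqrt hdpos]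

/-- for a connected weighted graph, `L* L = I - m⁻¹ ι d'` with `m = ι'd`. -/
theorem stmt7 {n : ℕ} (A : Matrix (Fin n) (Fin n) ℝ) (hsym : Aᵀ = A)
    (hnn : ∀ i j, 0 ≤ A i j) (hdiag : ∀ i, A i i = 0)
    (d : Fin n → ℝ) (hdeg : ∀ i, d i = ∑ j, A i j) (hdpos : ∀ i, 0 < d i)
    (hconn : Conn A) :
    gstar d (Matrix.diagonal d - A) * (Matrix.diagonal d - A) =
      1 - (∑ i, d i)⁻¹ • vecMulVec (fun _ => (1 : ℝ)) d :=
  stmt7_general A hsym hnn d hdeg hdpos hconn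
end

section
/- Variance bound for differences: for a connected weighted graph and homoskedastic errors, with d_{ij} := Σ_k A_{ik}A_{jk} and h_{ij} := (d_{ij}^{−1} Σ_k A_{ik}A_{jk}/d_k)^{−1} (taken as ∞ if d_{ij}=0), one has σ²(1/d_i + 1/d_j − 2A_{ij}/(d_i d_j)) ≤ var(α̂_i − α̂_j) ≤ σ²(1/d_i + 1/d_j − 2A_{ij}/(d_i d_j)) + (σ²/λ₂)(1/(d_i h_i) + 1/(d_j h_j) − 2 d_{ij}/(d_i d_j h_{ij})). -/
open Matrix BigOperators

/-! With `S = I - M` the normalized Laplacian (`M = D^{-1/2} A D^{-1/2}`), the vector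
`u = D^{1/2} 1` spans `ker S`, and the variance is `σ² yᵀ S† y` for `y = D^{-1/2}(eᵢ - eⱼ) ⊥ u`.
On `u^⊥` the pseudoinverse inverts `S`, whence `S† = I + M + M S† M` there and
`yᵀ S† y = ‖y‖² + yᵀ M y + zᵀ S† z` with `z = M y`. The first two terms give the lower bound
`1/dᵢ + 1/dⱼ - 2Aᵢⱼ/(dᵢdⱼ)`, and the Rayleigh bound `λ₂ ‖w‖² ≤ wᵀ S w` applied to `w = S† z`,
together with Cauchy–Schwarz, gives `0 ≤ zᵀ S† z ≤ ‖z‖²/λ₂`. -/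

theorem dotProduct_self_nonneg {n R : Type*} [Fintype n] [Ring R] [LinearOrder R]
    [IsStrictOrderedRing R] (v : n → R) : 0 ≤ v ⬝ᵥ v :=
  Finset.sum_nonneg fun i _ => mul_self_nonneg (v i)

theorem dotProduct_sq_le_dotProduct_self_mul {n : Type*} [Fintype n] (v w : n → ℝ) :
    (v ⬝ᵥ w) ^ 2 ≤ (v ⬝ᵥ v) * (w ⬝ᵥ w) := by
  simpa only [dotProduct, sq] using Finset.sum_mul_sq_le_sq_mul_sq Finset.univ v w

namespace Matrix

section CommRing

variable {m n R : Type*} [Fintype m] [Fintype n] [CommRing R]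

theorem IsSymm.mulVec_dotProduct {S : Matrix n n R} (hS : S.IsSymm) (x y : n → R) :
    S *ᵥ x ⬝ᵥ y = x ⬝ᵥ S *ᵥ y := by
  rw [dotProduct_mulVec, ← vecMul_transpose, hS.eq]

theorem single_sub_single_dotProduct_mulVec [DecidableEq n] (X : Matrix n n R) (i j : n) :
    (Pi.single i 1 - Pi.single j 1) ⬝ᵥ X *ᵥ (Pi.single i 1 - Pi.single j 1) =
      X i i - X i j - X j i + X j j := by
  simp only [mulVec_sub, sub_dotProduct, dotProduct_sub, single_dotProduct, mulVec_single_one,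
    col_apply, one_mul]
  ring

def IsPenroseInverse (M : Matrix m n R) (N : Matrix n m R) : Prop :=
  M * N * M = M ∧ N * M * N = N ∧ (M * N)ᵀ = M * N ∧ (N * M)ᵀ = N * M

namespace IsPenroseInverse

variable {M : Matrix m n R} {N N' : Matrix n m R}

theorem transpose (hN : IsPenroseInverse M N) : IsPenroseInverse Mᵀ Nᵀ := by
  obtain ⟨h1, h2, h3, h4⟩ := hN
  refine ⟨?_, ?_, ?_, ?_⟩
  · rw [← transpose_mul, ← transpose_mul, ← Matrix.mul_assoc, h1]
  · rw [← transpose_mul, ← transpose_mul, ← Matrix.mul_assoc, h2]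
  · rw [← transpose_mul, h4, h4]
  · rw [← transpose_mul, h3, h3]

theorem unique (hN : IsPenroseInverse M N) (hN' : IsPenroseInverse M N') : N = N' := by
  obtain ⟨h1, h2, h3, h4⟩ := hN
  obtain ⟨h1', h2', h3', h4'⟩ := hN'
  have hMN : M * N = M * N' :=
    calc M * N = M * N' * M * N := by rw [h1']
      _ = (M * N')ᵀ * (M * N)ᵀ := by rw [h3, h3', Matrix.mul_assoc]
      _ = (M * N * (M * N'))ᵀ := (transpose_mul _ _).symm
      _ = M * N' := by rw [← Matrix.mul_assoc, h1, h3']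
  have hNM : N * M = N' * M :=
    calc N * M = N * (M * N' * M) := by rw [h1']
      _ = (N * M)ᵀ * (N' * M)ᵀ := by simp only [h4, h4', Matrix.mul_assoc]
      _ = (N' * M * (N * M))ᵀ := (transpose_mul _ _).symm
      _ = N' * M := by rw [Matrix.mul_assoc, ← Matrix.mul_assoc M, h1, h4']
  calc N = N * M * N := h2.symm
    _ = N' * M * N' := by rw [hNM, Matrix.mul_assoc, hMN, ← Matrix.mul_assoc]
    _ = N' := h2'

theorem isSymm {S N : Matrix n n R} (hS : S.IsSymm) (hN : IsPenroseInverse S N) : N.IsSymm := by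
  have hNt := hN.transpose
  rw [hS.eq] at hNt
  exact (hN.unique hNt).symm

theorem commute {S N : Matrix n n R} (hS : S.IsSymm) (hN : IsPenroseInverse S N) :
    S * N = N * S := by
  rw [← hN.2.2.1, transpose_mul, hS.eq, (hN.isSymm hS).eq]

end IsPenroseInverse

end CommRing

variable {n : Type*} [Fintype n]

theorem isPenroseInverse_diagonal {K : Type*} [Field K] [DecidableEq n] (e : n → K) :
    IsPenroseInverse (diagonal e) (diagonal e⁻¹) := by
  refine ⟨?_, ?_, ?_, ?_⟩ <;> simp only [diagonal_mul_diagonal, diagonal_transpose]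
  all_goals congr 1; ext k; by_cases h : e k = 0 <;> simp [h]

theorem exists_isPenroseInverse_of_isSymm [DecidableEq n] {S : Matrix n n ℝ} (hS : S.IsSymm) :
    ∃ N, IsPenroseInverse S N := by
  have hH : S.IsHermitian := by
    rwa [Matrix.IsHermitian, conjTranspose_eq_transpose_of_trivial]
  set φ := Unitary.conjStarAlgAut ℝ _ hH.eigenvectorUnitary
  have hφ (X : Matrix n n ℝ) : (φ X)ᵀ = φ Xᵀ := by
    simpa only [star_eq_conjTranspose, conjTranspose_eq_transpose_of_trivial] using
      (map_star φ X).symm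
  obtain ⟨e, hSe⟩ : ∃ e : n → ℝ, S = φ (diagonal e) := ⟨_, hH.spectral_theorem⟩
  obtain ⟨h1, h2, h3, h4⟩ := isPenroseInverse_diagonal e
  refine ⟨φ (diagonal e⁻¹), ?_⟩
  rw [hSe]
  refine ⟨?_, ?_, ?_, ?_⟩ <;> simp only [← map_mul, hφ, h1, h2, h3, h4]

def RayleighLowerBound (S : Matrix n n ℝ) (u : n → ℝ) (lam : ℝ) : Prop :=
  ∀ x, u ⬝ᵥ x = 0 → lam * (x ⬝ᵥ x) ≤ x ⬝ᵥ S *ᵥ x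

variable {S N : Matrix n n ℝ} {u : n → ℝ} {lam : ℝ}

theorem rayleighLowerBound_of_mem_lowerBounds
    (h : lam ∈ lowerBounds {r | ∃ x, x ≠ 0 ∧ u ⬝ᵥ x = 0 ∧ r = x ⬝ᵥ S *ᵥ x / x ⬝ᵥ x}) :
    RayleighLowerBound S u lam := by
  intro x hx
  rcases eq_or_ne x 0 with rfl | hx0
  · simp
  · have hpos : 0 < x ⬝ᵥ x :=
      (dotProduct_self_nonneg x).lt_of_ne' (dotProduct_self_eq_zero.not.mpr hx0)
    exact (le_div_iff₀ hpos).mp (h ⟨x, hx0, hx, rfl⟩)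

theorem RayleighLowerBound.eq_zero_of_mulVec_eq_zero (hgap : RayleighLowerBound S u lam)
    (hlam : 0 < lam) {x : n → ℝ} (hSx : S *ᵥ x = 0) (hux : u ⬝ᵥ x = 0) : x = 0 := by
  have hxx : lam * (x ⬝ᵥ x) ≤ 0 := by simpa [hSx] using hgap x hux
  exact dotProduct_self_eq_zero.mp <|
    le_antisymm (nonpos_of_mul_nonpos_right hxx hlam) (dotProduct_self_nonneg x)

namespace IsPenroseInverse

theorem mulVec_eq_zero (hS : S.IsSymm) (hN : IsPenroseInverse S N) (hSu : S *ᵥ u = 0) :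
    N *ᵥ u = 0 := by
  rw [← hN.2.1, Matrix.mul_assoc, hN.commute hS, ← Matrix.mul_assoc, ← mulVec_mulVec, hSu,
    mulVec_zero]

theorem inv_mulVec_mulVec (hS : S.IsSymm) (hN : IsPenroseInverse S N) (hSu : S *ᵥ u = 0)
    (hlam : 0 < lam) (hgap : RayleighLowerBound S u lam) {x : n → ℝ} (hx : u ⬝ᵥ x = 0) :
    N *ᵥ S *ᵥ x = x := by
  refine sub_eq_zero.mp (hgap.eq_zero_of_mulVec_eq_zero hlam ?_ ?_)
  · rw [mulVec_sub, mulVec_mulVec, mulVec_mulVec, hN.1, sub_self]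
  · rw [dotProduct_sub, ← (hN.isSymm hS).mulVec_dotProduct, hN.mulVec_eq_zero hS hSu,
      zero_dotProduct, hx, sub_zero]

theorem mulVec_inv_mulVec (hS : S.IsSymm) (hN : IsPenroseInverse S N) (hSu : S *ᵥ u = 0)
    (hlam : 0 < lam) (hgap : RayleighLowerBound S u lam) {x : n → ℝ} (hx : u ⬝ᵥ x = 0) :
    S *ᵥ N *ᵥ x = x := by
  rw [mulVec_mulVec, hN.commute hS, ← mulVec_mulVec, hN.inv_mulVec_mulVec hS hSu hlam hgap hx]

theorem lam_mul_dotProduct_le (hS : S.IsSymm) (hN : IsPenroseInverse S N) (hSu : S *ᵥ u = 0)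
    (hlam : 0 < lam) (hgap : RayleighLowerBound S u lam) {z : n → ℝ} (hz : u ⬝ᵥ z = 0) :
    lam * (N *ᵥ z ⬝ᵥ N *ᵥ z) ≤ z ⬝ᵥ N *ᵥ z := by
  have hu : u ⬝ᵥ N *ᵥ z = 0 := by
    rw [← (hN.isSymm hS).mulVec_dotProduct, hN.mulVec_eq_zero hS hSu, zero_dotProduct]
  simpa [hN.mulVec_inv_mulVec hS hSu hlam hgap hz, dotProduct_comm z] using hgap _ hu

theorem dotProduct_mulVec_nonneg (hS : S.IsSymm) (hN : IsPenroseInverse S N) (hSu : S *ᵥ u = 0)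
    (hlam : 0 < lam) (hgap : RayleighLowerBound S u lam) {z : n → ℝ} (hz : u ⬝ᵥ z = 0) :
    0 ≤ z ⬝ᵥ N *ᵥ z :=
  (mul_nonneg hlam.le (dotProduct_self_nonneg _)).trans
    (hN.lam_mul_dotProduct_le hS hSu hlam hgap hz)

/-- Cauchy–Schwarz turns `lam ‖N z‖² ≤ ⟪z, N z⟫` into `lam ⟪z, N z⟫ ≤ ‖z‖²`. -/
theorem lam_mul_dotProduct_mulVec_le (hS : S.IsSymm) (hN : IsPenroseInverse S N)
    (hSu : S *ᵥ u = 0) (hlam : 0 < lam) (hgap : RayleighLowerBound S u lam) {z : n → ℝ}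
    (hz : u ⬝ᵥ z = 0) :
    lam * (z ⬝ᵥ N *ᵥ z) ≤ z ⬝ᵥ z := by
  have hNz := hN.lam_mul_dotProduct_le hS hSu hlam hgap hz
  have hcs := dotProduct_sq_le_dotProduct_self_mul z (N *ᵥ z)
  have hzz := dotProduct_self_nonneg z
  rcases (hN.dotProduct_mulVec_nonneg hS hSu hlam hgap hz).eq_or_lt with h0 | h0
  · rwa [← h0, mul_zero]
  · refine le_of_mul_le_mul_right ?_ h0
    nlinarith [mul_le_mul_of_nonneg_left hNz hzz, mul_le_mul_of_nonneg_left hcs hlam.le]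

theorem dotProduct_mulVec_eq (hS : S.IsSymm) (hN : IsPenroseInverse S N) (hSu : S *ᵥ u = 0)
    (hlam : 0 < lam) (hgap : RayleighLowerBound S u lam) {y : n → ℝ} (hy : u ⬝ᵥ y = 0) :
    y ⬝ᵥ N *ᵥ y =
      y ⬝ᵥ y + y ⬝ᵥ (y - S *ᵥ y) + (y - S *ᵥ y) ⬝ᵥ N *ᵥ (y - S *ᵥ y) := by
  have hSNy : S *ᵥ y ⬝ᵥ N *ᵥ y = y ⬝ᵥ y := by
    rw [hS.mulVec_dotProduct, hN.mulVec_inv_mulVec hS hSu hlam hgap hy]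
  rw [mulVec_sub, hN.inv_mulVec_mulVec hS hSu hlam hgap hy]
  simp only [sub_dotProduct, dotProduct_sub, hSNy, hS.mulVec_dotProduct]
  ring

theorem dotProduct_mulVec_bounds (hS : S.IsSymm) (hN : IsPenroseInverse S N)
    (hSu : S *ᵥ u = 0) (hlam : 0 < lam) (hgap : RayleighLowerBound S u lam) {y : n → ℝ}
    (hy : u ⬝ᵥ y = 0) :
    y ⬝ᵥ y + y ⬝ᵥ (y - S *ᵥ y) ≤ y ⬝ᵥ N *ᵥ y ∧
      y ⬝ᵥ N *ᵥ y ≤ y ⬝ᵥ y + y ⬝ᵥ (y - S *ᵥ y) + (y - S *ᵥ y) ⬝ᵥ (y - S *ᵥ y) / lam := by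
  have hz : u ⬝ᵥ (y - S *ᵥ y) = 0 := by
    rw [dotProduct_sub, ← hS.mulVec_dotProduct, hSu, zero_dotProduct, hy, sub_zero]
  rw [hN.dotProduct_mulVec_eq hS hSu hlam hgap hy]
  refine ⟨le_add_of_nonneg_right (hN.dotProduct_mulVec_nonneg hS hSu hlam hgap hz), ?_⟩
  gcongr
  rw [le_div_iff₀ hlam, mul_comm]
  exact hN.lam_mul_dotProduct_mulVec_le hS hSu hlam hgap hz

end IsPenroseInverse

end Matrix

theorem mpinv_isPenroseInverse {n : ℕ} {S : Matrix (Fin n) (Fin n) ℝ} (hS : S.IsSymm) :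
    S.IsPenroseInverse (mpinv S) := by
  have h : ∃ N, S * N * S = S ∧ N * S * N = N ∧ (S * N)ᵀ = S * N ∧ (N * S)ᵀ = N * S :=
    exists_isPenroseInverse_of_isSymm hS
  rw [mpinv, dif_pos h]
  exact h.choose_spec

section NormalizedAdjacency

variable {n : ℕ} {d : Fin n → ℝ} {A : Matrix (Fin n) (Fin n) ℝ}

theorem isSymm_dhalfInv (d : Fin n → ℝ) : (dhalfInv d).IsSymm :=
  isSymm_diagonal _

theorem Matrix.IsSymm.dhalfInv_mul_mul_dhalfInv {X : Matrix (Fin n) (Fin n) ℝ}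
    (hX : X.IsSymm) : (dhalfInv d * X * dhalfInv d).IsSymm := by
  rw [IsSymm, transpose_mul, transpose_mul, (isSymm_dhalfInv d).eq, hX.eq, Matrix.mul_assoc]

theorem dhalfInv_mul_mul_dhalfInv_apply (d : Fin n → ℝ) (X : Matrix (Fin n) (Fin n) ℝ)
    (a b : Fin n) :
    (dhalfInv d * X * dhalfInv d) a b = X a b / (√(d a) * √(d b)) := by
  simp only [dhalfInv, mul_diagonal, diagonal_mul]
  field_simp

theorem dhalfInv_mul_dhalfInv (hd : ∀ i, 0 ≤ d i) :
    dhalfInv d * dhalfInv d = diagonal fun i => (d i)⁻¹ := by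
  rw [dhalfInv, diagonal_mul_diagonal]
  congr 1; ext i
  rw [div_mul_div_comm, one_mul, Real.mul_self_sqrt (hd i), one_div]

theorem dhalfInv_mul_diagonal_mul_dhalfInv (hd : ∀ i, 0 < d i) :
    dhalfInv d * diagonal d * dhalfInv d = 1 := by
  ext a b
  rw [dhalfInv_mul_mul_dhalfInv_apply]
  rcases eq_or_ne a b with rfl | hab
  · simp [Real.mul_self_sqrt (hd a).le, (hd a).ne']
  · simp [hab]

theorem gstar_diagonal_sub (hd : ∀ i, 0 < d i) (A : Matrix (Fin n) (Fin n) ℝ) :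
    gstar d (diagonal d - A) =
      dhalfInv d * mpinv (1 - dhalfInv d * A * dhalfInv d) * dhalfInv d := by
  rw [gstar, Matrix.mul_sub, Matrix.sub_mul, dhalfInv_mul_diagonal_mul_dhalfInv hd]

theorem dhalfInv_mul_mul_dhalfInv_mulVec_sqrt (hdeg : ∀ i, d i = ∑ j, A i j)
    (hd : ∀ i, 0 < d i) :
    (dhalfInv d * A * dhalfInv d) *ᵥ (fun i => √(d i)) = fun i => √(d i) := by
  ext a
  have hterm (b : Fin n) : A a b / (√(d a) * √(d b)) * √(d b) = A a b / √(d a) := by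
    have := Real.sqrt_pos.2 (hd b)
    field_simp
  simp only [mulVec, dotProduct, dhalfInv_mul_mul_dhalfInv_apply, hterm, ← Finset.sum_div,
    ← hdeg a, Real.div_sqrt]

theorem sqrt_dotProduct_dhalfInv_mulVec (hd : ∀ i, 0 < d i) (i j : Fin n) :
    (fun k => √(d k)) ⬝ᵥ dhalfInv d *ᵥ (Pi.single i 1 - Pi.single j 1) = 0 := by
  have hu : dhalfInv d *ᵥ (fun k => √(d k)) = 1 := by
    ext k
    simp [dhalfInv, mulVec_diagonal, (Real.sqrt_pos.2 (hd k)).ne']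
  rw [← (isSymm_dhalfInv d).mulVec_dotProduct, hu, dotProduct_sub, dotProduct_single,
    dotProduct_single]
  simp

theorem dhalfInv_mulVec_dotProduct (d : Fin n → ℝ) (X : Matrix (Fin n) (Fin n) ℝ)
    (x : Fin n → ℝ) :
    dhalfInv d *ᵥ x ⬝ᵥ X *ᵥ dhalfInv d *ᵥ x = x ⬝ᵥ (dhalfInv d * X * dhalfInv d) *ᵥ x := by
  rw [(isSymm_dhalfInv d).mulVec_dotProduct, mulVec_mulVec, mulVec_mulVec]

theorem dhalfInv_mulVec_dotProduct_dhalfInv_mulVec (hd : ∀ i, 0 ≤ d i) (x v : Fin n → ℝ) :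
    dhalfInv d *ᵥ x ⬝ᵥ dhalfInv d *ᵥ v = x ⬝ᵥ diagonal (fun i => (d i)⁻¹) *ᵥ v := by
  rw [(isSymm_dhalfInv d).mulVec_dotProduct, mulVec_mulVec, dhalfInv_mul_dhalfInv hd]

theorem dhalfInv_mul_mul_dhalfInv_mulVec_dhalfInv_mulVec (hd : ∀ i, 0 ≤ d i) (x : Fin n → ℝ) :
    (dhalfInv d * A * dhalfInv d) *ᵥ dhalfInv d *ᵥ x =
      dhalfInv d *ᵥ A *ᵥ diagonal (fun i => (d i)⁻¹) *ᵥ x := by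
  simp only [mulVec_mulVec, Matrix.mul_assoc, dhalfInv_mul_dhalfInv hd]

theorem diagonal_mul_mul_diagonal_apply {ι α : Type*} [Fintype ι] [DecidableEq ι]
    [NonUnitalNonAssocSemiring α] (w : ι → α) (X : Matrix ι ι α) (a b : ι) : (diagonal w * X * diagonal w) a b = w a * X a b * w b := by
  simp only [mul_diagonal, diagonal_mul]

theorem dotProduct_self_dhalfInv_mulVec_single_sub_single (hd : ∀ k, 0 ≤ d k) {i j : Fin n}
    (hij : i ≠ j) :
    dhalfInv d *ᵥ (Pi.single i 1 - Pi.single j 1) ⬝ᵥ dhalfInv d *ᵥ (Pi.single i 1 - Pi.single j 1)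
      = 1 / d i + 1 / d j := by
  rw [dhalfInv_mulVec_dotProduct_dhalfInv_mulVec hd, single_sub_single_dotProduct_mulVec,
    diagonal_apply_ne _ hij, diagonal_apply_ne _ hij.symm, diagonal_apply_eq, diagonal_apply_eq]
  ring

theorem dotProduct_normAdj_mulVec_single_sub_single (hA : A.IsSymm) (hdiag : ∀ k, A k k = 0)
    (hd : ∀ k, 0 ≤ d k) (i j : Fin n) :
    dhalfInv d *ᵥ (Pi.single i 1 - Pi.single j 1) ⬝ᵥ
        (dhalfInv d * A * dhalfInv d) *ᵥ dhalfInv d *ᵥ (Pi.single i 1 - Pi.single j 1)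
      = -(2 * A i j / (d i * d j)) := by
  rw [dhalfInv_mul_mul_dhalfInv_mulVec_dhalfInv_mulVec hd,
    dhalfInv_mulVec_dotProduct_dhalfInv_mulVec hd, mulVec_mulVec, mulVec_mulVec,
    single_sub_single_dotProduct_mulVec]
  simp only [diagonal_mul_mul_diagonal_apply, hdiag, hA.apply i j]
  ring

theorem normAdj_mulVec_dotProduct_self_single_sub_single (hA : A.IsSymm) (hd : ∀ k, 0 ≤ d k)
    (i j : Fin n) :
    (dhalfInv d * A * dhalfInv d) *ᵥ dhalfInv d *ᵥ (Pi.single i 1 - Pi.single j 1) ⬝ᵥ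
        (dhalfInv d * A * dhalfInv d) *ᵥ dhalfInv d *ᵥ (Pi.single i 1 - Pi.single j 1)
      = (∑ k, A i k ^ 2 / d k) / d i ^ 2 + (∑ k, A j k ^ 2 / d k) / d j ^ 2
        - 2 * (∑ k, A i k * A j k / d k) / (d i * d j) := by
  set Dinv : Matrix (Fin n) (Fin n) ℝ := diagonal fun k => (d k)⁻¹
  have hADA (a b : Fin n) : (A * Dinv * A) a b = ∑ k, A a k * A b k / d k := by
    rw [mul_apply]
    simp only [Dinv, mul_diagonal, hA.apply b]
    exact Finset.sum_congr rfl fun k _ => by ring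
  have hji : ∑ k, A j k * A i k / d k = ∑ k, A i k * A j k / d k :=
    Finset.sum_congr rfl fun k _ => by ring
  rw [dhalfInv_mul_mul_dhalfInv_mulVec_dhalfInv_mulVec hd,
    dhalfInv_mulVec_dotProduct_dhalfInv_mulVec hd, hA.mulVec_dotProduct,
    (isSymm_diagonal _).mulVec_dotProduct]
  simp only [mulVec_mulVec]
  rw [show Dinv * (A * (Dinv * (A * Dinv))) = Dinv * (A * Dinv * A) * Dinv by
    simp only [Matrix.mul_assoc], single_sub_single_dotProduct_mulVec]
  simp only [Dinv, diagonal_mul_mul_diagonal_apply, hADA, hji, ← sq]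
  ring

theorem gstar_diagonal_sub_quadForm (hA : A.IsSymm) (hd : ∀ i, 0 < d i) (i j : Fin n) :
    gstar d (diagonal d - A) i i - 2 * gstar d (diagonal d - A) i j
        + gstar d (diagonal d - A) j j =
      dhalfInv d *ᵥ (Pi.single i 1 - Pi.single j 1) ⬝ᵥ mpinv (1 - dhalfInv d * A * dhalfInv d) *ᵥ
        dhalfInv d *ᵥ (Pi.single i 1 - Pi.single j 1) := by
  have hS : (1 - dhalfInv d * A * dhalfInv d).IsSymm :=
    isSymm_one.sub hA.dhalfInv_mul_mul_dhalfInv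
  have hG := ((mpinv_isPenroseInverse hS).isSymm hS).dhalfInv_mul_mul_dhalfInv (d := d)
  rw [dhalfInv_mulVec_dotProduct, gstar_diagonal_sub hd, single_sub_single_dotProduct_mulVec,
    hG.apply i j]
  ring

end NormalizedAdjacency

/-- `var(α̂ᵢ-α̂ⱼ) = σ²((L*)ᵢᵢ - 2(L*)ᵢⱼ + (L*)ⱼⱼ)` and `dᵢⱼ/hᵢⱼ = Σₖ AᵢₖAⱼₖ/dₖ`. -/
theorem stmt13_general {n : ℕ} (A : Matrix (Fin n) (Fin n) ℝ) (hsym : Aᵀ = A)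
    (hdiag : ∀ i, A i i = 0)
    (d : Fin n → ℝ) (hdeg : ∀ i, d i = ∑ j, A i j) (hdpos : ∀ i, 0 < d i)
    (S : Matrix (Fin n) (Fin n) ℝ)
    (hS : S = 1 - dhalfInv d * A * dhalfInv d)
    (lam2 : ℝ) (hlampos : 0 < lam2)
    (hlam : IsLeast {r : ℝ | ∃ x : Fin n → ℝ, x ≠ 0 ∧
        (fun i => Real.sqrt (d i)) ⬝ᵥ x = 0 ∧ r = (x ⬝ᵥ (S *ᵥ x)) / (x ⬝ᵥ x)} lam2)
    (h : Fin n → ℝ) (hh : ∀ i, h i = ((d i)⁻¹ * ∑ j, (A i j) ^ 2 / d j)⁻¹)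
    (σ2 : ℝ) (hσ : 0 ≤ σ2) (i j : Fin n) (hij : i ≠ j) :
    σ2 * (1 / d i + 1 / d j - 2 * A i j / (d i * d j)) ≤
      σ2 * (gstar d (Matrix.diagonal d - A) i i
        - 2 * gstar d (Matrix.diagonal d - A) i j
        + gstar d (Matrix.diagonal d - A) j j) ∧
    σ2 * (gstar d (Matrix.diagonal d - A) i i
        - 2 * gstar d (Matrix.diagonal d - A) i j
        + gstar d (Matrix.diagonal d - A) j j) ≤
      σ2 * (1 / d i + 1 / d j - 2 * A i j / (d i * d j))
      + σ2 / lam2 * (1 / (d i * h i) + 1 / (d j * h j)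
          - 2 * (∑ k, A i k * A j k / d k) / (d i * d j)) := by
  have hd (k : Fin n) : 0 ≤ d k := (hdpos k).le
  have hSsymm : S.IsSymm := hS ▸ isSymm_one.sub (IsSymm.dhalfInv_mul_mul_dhalfInv hsym)
  have hN := mpinv_isPenroseInverse hSsymm
  have hSu : S *ᵥ (fun k => √(d k)) = 0 := by
    rw [hS, sub_mulVec, one_mulVec, dhalfInv_mul_mul_dhalfInv_mulVec_sqrt hdeg hdpos, sub_self]
  have hSy (y : Fin n → ℝ) : y - S *ᵥ y = (dhalfInv d * A * dhalfInv d) *ᵥ y := by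
    rw [hS, sub_mulVec, one_mulVec, sub_sub_cancel]
  have hdh (k : Fin n) : 1 / (d k * h k) = (∑ l, A k l ^ 2 / d l) / d k ^ 2 := by
    rw [hh, one_div, mul_inv, inv_inv]
    ring
  obtain ⟨hlow, hup⟩ := hN.dotProduct_mulVec_bounds hSsymm hSu hlampos
    (rayleighLowerBound_of_mem_lowerBounds hlam.2) (sqrt_dotProduct_dhalfInv_mulVec hdpos i j)
  rw [hSy, dotProduct_self_dhalfInv_mulVec_single_sub_single hd hij,
    dotProduct_normAdj_mulVec_single_sub_single hsym hdiag hd] at hlow hup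
  rw [normAdj_mulVec_dotProduct_self_single_sub_single hsym hd] at hup
  rw [gstar_diagonal_sub_quadForm hsym hdpos, ← hS, hdh i, hdh j]
  exact ⟨(mul_le_mul_of_nonneg_left hlow hσ).trans_eq' (by ring),
    (mul_le_mul_of_nonneg_left hup hσ).trans_eq (by ring)⟩

/-- variance bound for differences `α̂ᵢ - α̂ⱼ` (i ≠ j), where
`var(α̂ᵢ-α̂ⱼ) = σ²((L*)ᵢᵢ - 2(L*)ᵢⱼ + (L*)ⱼⱼ)` and `dᵢⱼ/hᵢⱼ = Σₖ AᵢₖAⱼₖ/dₖ`. -/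
theorem stmt13 {n : ℕ} (A : Matrix (Fin n) (Fin n) ℝ) (hsym : Aᵀ = A)
    (hnn : ∀ i j, 0 ≤ A i j) (hdiag : ∀ i, A i i = 0)
    (d : Fin n → ℝ) (hdeg : ∀ i, d i = ∑ j, A i j) (hdpos : ∀ i, 0 < d i)
    (hconn : Conn A)
    (S : Matrix (Fin n) (Fin n) ℝ)
    (hS : S = 1 - dhalfInv d * A * dhalfInv d)
    (lam2 : ℝ) (hlampos : 0 < lam2)
    (hlam : IsLeast {r : ℝ | ∃ x : Fin n → ℝ, x ≠ 0 ∧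
        (fun i => Real.sqrt (d i)) ⬝ᵥ x = 0 ∧ r = (x ⬝ᵥ (S *ᵥ x)) / (x ⬝ᵥ x)} lam2)
    (h : Fin n → ℝ) (hh : ∀ i, h i = ((d i)⁻¹ * ∑ j, (A i j) ^ 2 / d j)⁻¹)
    (σ2 : ℝ) (hσ : 0 ≤ σ2) (i j : Fin n) (hij : i ≠ j) :
    σ2 * (1 / d i + 1 / d j - 2 * A i j / (d i * d j)) ≤
      σ2 * (gstar d (Matrix.diagonal d - A) i i
        - 2 * gstar d (Matrix.diagonal d - A) i j
        + gstar d (Matrix.diagonal d - A) j j) ∧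
    σ2 * (gstar d (Matrix.diagonal d - A) i i
        - 2 * gstar d (Matrix.diagonal d - A) i j
        + gstar d (Matrix.diagonal d - A) j j) ≤
      σ2 * (1 / d i + 1 / d j - 2 * A i j / (d i * d j))
      + σ2 / lam2 * (1 / (d i * h i) + 1 / (d j * h j)
          - 2 * (∑ k, A i k * A j k / d k) / (d i * d j)) :=
  stmt13_general A hsym hdiag d hdeg hdpos S hS lam2 hlampos hlam h hh σ2 hσ i j hij
end

section
/- For a connected weighted graph with Laplacian L, the Moore–Penrose pseudoinverse satisfies L† = M_ι L* M_ι, where M_ι = I_n − n^{−1} ι_n ι_n' and L* = D^{−1/2}(D^{−1/2}LD^{−1/2})†D^{−1/2}. -/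
open Matrix BigOperators

section Aux

/-- The four Penrose conditions (square case). -/
def Penrose {n : ℕ} (M N : Matrix (Fin n) (Fin n) ℝ) : Prop :=
  M * N * M = M ∧ N * M * N = N ∧ (M * N)ᵀ = M * N ∧ (N * M)ᵀ = N * M

lemma exists_penrose_of_symm {n : ℕ} (M : Matrix (Fin n) (Fin n) ℝ) (h : Mᵀ = M) :
    ∃ N, Penrose M N := by
  have hH : M.IsHermitian := h
  set U : Matrix (Fin n) (Fin n) ℝ := (hH.eigenvectorUnitary : Matrix (Fin n) (Fin n) ℝ)
    with hUdef
  have hU1 : star U * U = 1 := (Matrix.mem_unitaryGroup_iff').mp hH.eigenvectorUnitary.2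
  set f : Fin n → ℝ := hH.eigenvalues with hfdef
  have hM : M = U * Matrix.diagonal f * star U := by simpa using hH.spectral_theorem
  set g : Fin n → ℝ := fun i => if f i = 0 then 0 else (f i)⁻¹ with hgdef
  have key : ∀ (a b : Fin n → ℝ),
      (U * Matrix.diagonal a * star U) * (U * Matrix.diagonal b * star U)
        = U * Matrix.diagonal (a * b) * star U := by
    intro a b
    simp only [Matrix.mul_assoc]
    rw [← Matrix.mul_assoc (star U) U, hU1, Matrix.one_mul,
      ← Matrix.mul_assoc (Matrix.diagonal a), Matrix.diagonal_mul_diagonal]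
    rfl
  have hT : ∀ a : Fin n → ℝ, (U * Matrix.diagonal a * star U)ᵀ
      = U * Matrix.diagonal a * star U := by
    intro a
    have hsU : star U = Uᵀ := rfl
    rw [hsU, Matrix.transpose_mul, Matrix.transpose_mul, Matrix.transpose_transpose,
      Matrix.diagonal_transpose, Matrix.mul_assoc]
  have hfgf : f * g * f = f := by
    ext i
    by_cases hf : f i = 0 <;> simp [hgdef, hf]
  have hgfg : g * f * g = g := by
    ext i
    by_cases hf : f i = 0 <;> simp [hgdef, hf]
  refine ⟨U * Matrix.diagonal g * star U, ?_, ?_, ?_, ?_⟩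
  · rw [hM, key, key, hfgf]
  · rw [hM, key, key, hgfg]
  · rw [hM, key, hT]
  · rw [hM, key, hT]

lemma penrose_unique {n : ℕ} {M N₁ N₂ : Matrix (Fin n) (Fin n) ℝ}
    (h1 : Penrose M N₁) (h2 : Penrose M N₂) : N₁ = N₂ := by
  obtain ⟨p1, p2, p3, p4⟩ := h1
  obtain ⟨q1, q2, q3, q4⟩ := h2
  have hMt : Mᵀ = Mᵀ * (M * N₂) := by
    conv_lhs => rw [← q1]
    rw [Matrix.transpose_mul, q3]
  have hMt' : Mᵀ = (N₁ * M) * Mᵀ := by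
    conv_lhs => rw [← p1]
    rw [Matrix.mul_assoc, Matrix.transpose_mul, p4]
  have e1 : N₁ = N₁ * M * N₂ := by
    calc N₁ = N₁ * M * N₁ := p2.symm
      _ = N₁ * (M * N₁)ᵀ := by rw [p3, Matrix.mul_assoc]
      _ = N₁ * (N₁ᵀ * Mᵀ) := by rw [Matrix.transpose_mul]
      _ = N₁ * (N₁ᵀ * (Mᵀ * (M * N₂))) := by rw [← hMt]
      _ = N₁ * ((N₁ᵀ * Mᵀ) * (M * N₂)) := by rw [Matrix.mul_assoc]
      _ = N₁ * ((M * N₁)ᵀ * (M * N₂)) := by rw [Matrix.transpose_mul]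
      _ = N₁ * ((M * N₁) * (M * N₂)) := by rw [p3]
      _ = (N₁ * M * N₁) * (M * N₂) := by simp only [Matrix.mul_assoc]
      _ = N₁ * M * N₂ := by rw [p2]; simp only [Matrix.mul_assoc]
  have e2 : N₂ = N₁ * M * N₂ := by
    calc N₂ = N₂ * M * N₂ := q2.symm
      _ = (N₂ * M)ᵀ * N₂ := by rw [q4]
      _ = Mᵀ * N₂ᵀ * N₂ := by rw [Matrix.transpose_mul]
      _ = ((N₁ * M) * Mᵀ) * N₂ᵀ * N₂ := by rw [← hMt']
      _ = (N₁ * M) * (Mᵀ * N₂ᵀ) * N₂ := by simp only [Matrix.mul_assoc]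
      _ = (N₁ * M) * (N₂ * M)ᵀ * N₂ := by rw [← Matrix.transpose_mul]
      _ = (N₁ * M) * (N₂ * M) * N₂ := by rw [q4]
      _ = N₁ * M * (N₂ * M * N₂) := by simp only [Matrix.mul_assoc]
      _ = N₁ * M * N₂ := by rw [q2]
  rw [e1, ← e2]

lemma mpinv_eq {n : ℕ} {M N : Matrix (Fin n) (Fin n) ℝ} (hN : Penrose M N) :
    mpinv M = N := by
  have hex : ∃ N' : Matrix (Fin n) (Fin n) ℝ,
      M * N' * M = M ∧ N' * M * N' = N' ∧ (M * N')ᵀ = M * N' ∧ (N' * M)ᵀ = N' * M := ⟨N, hN⟩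
  unfold mpinv
  rw [dif_pos hex]
  exact penrose_unique hex.choose_spec hN

lemma mpinv_penrose {n : ℕ} (M : Matrix (Fin n) (Fin n) ℝ) (h : Mᵀ = M) :
    Penrose M (mpinv M) := by
  obtain ⟨N, hN⟩ := exists_penrose_of_symm M h
  rw [mpinv_eq hN]
  exact hN

lemma mul_vmv {n : ℕ} (M : Matrix (Fin n) (Fin n) ℝ) (u w : Fin n → ℝ) :
    M * vecMulVec u w = vecMulVec (M *ᵥ u) w := by
  ext i j
  simp [Matrix.mul_apply, Matrix.vecMulVec_apply, Matrix.mulVec, dotProduct,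
    Finset.sum_mul, mul_assoc]

lemma vmv_mul {n : ℕ} (M : Matrix (Fin n) (Fin n) ℝ) (u w : Fin n → ℝ) :
    vecMulVec u w * M = vecMulVec u (w ᵥ* M) := by
  ext i j
  simp [Matrix.mul_apply, Matrix.vecMulVec_apply, Matrix.vecMul, dotProduct,
    Finset.mul_sum, mul_assoc]

lemma vmv_mul_vmv {n : ℕ} (u w x y : Fin n → ℝ) :
    vecMulVec u w * vecMulVec x y = (w ⬝ᵥ x) • vecMulVec u y := by
  ext i j
  simp [Matrix.mul_apply, Matrix.vecMulVec_apply, dotProduct, Finset.sum_mul,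
    Finset.mul_sum]
  ring_nf
  exact Finset.sum_congr rfl fun k _ => by ring

lemma vmv_transpose {n : ℕ} (u w : Fin n → ℝ) :
    (vecMulVec u w)ᵀ = vecMulVec w u := by
  ext i j
  simp [Matrix.vecMulVec_apply, mul_comm]

lemma lap_kernel {n : ℕ} (A : Matrix (Fin n) (Fin n) ℝ) (hsym : Aᵀ = A)
    (hnn : ∀ i j, 0 ≤ A i j)
    (d : Fin n → ℝ) (hdeg : ∀ i, d i = ∑ j, A i j)
    (hconn : ∀ i j : Fin n, Relation.ReflTransGen (fun a b => A a b ≠ 0) i j)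
    (x : Fin n → ℝ) (hx : (Matrix.diagonal d - A) *ᵥ x = 0) :
    ∃ c : ℝ, x = fun _ => c := by
  have hAsymm : ∀ i j, A j i = A i j := fun i j => by rw [← Matrix.transpose_apply A i j, hsym]
  have hquad : (∑ i, ∑ j, A i j * (x i - x j)^2) = 0 := by
    have h0 : x ⬝ᵥ ((Matrix.diagonal d - A) *ᵥ x) = 0 := by rw [hx]; simp
    have hexp : x ⬝ᵥ ((Matrix.diagonal d - A) *ᵥ x)
        = (∑ i, ∑ j, A i j * x i ^ 2) - ∑ i, ∑ j, A i j * (x i * x j) := by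
      rw [Matrix.sub_mulVec, dotProduct_sub]
      congr 1
      · simp only [dotProduct, Matrix.mulVec_diagonal]
        refine Finset.sum_congr rfl fun i _ => ?_
        rw [hdeg i, Finset.sum_mul, Finset.mul_sum]
        exact Finset.sum_congr rfl fun j _ => by ring
      · simp only [dotProduct, Matrix.mulVec]
        refine Finset.sum_congr rfl fun i _ => ?_
        rw [Finset.mul_sum]
        exact Finset.sum_congr rfl fun j _ => by ring
    have hswap : ∑ i, ∑ j, A i j * x j ^ 2 = ∑ i, ∑ j, A i j * x i ^ 2 := by
      rw [Finset.sum_comm]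
      exact Finset.sum_congr rfl fun i _ => Finset.sum_congr rfl fun j _ => by rw [hAsymm]
    calc (∑ i, ∑ j, A i j * (x i - x j)^2)
        = (∑ i, ∑ j, (A i j * x i ^ 2 + A i j * x j ^ 2 - 2 * (A i j * (x i * x j)))) := by
          refine Finset.sum_congr rfl fun i _ => Finset.sum_congr rfl fun j _ => by ring
      _ = (∑ i, ∑ j, A i j * x i ^ 2) + (∑ i, ∑ j, A i j * x j ^ 2)
            - 2 * ∑ i, ∑ j, A i j * (x i * x j) := by
          simp [Finset.sum_add_distrib, Finset.sum_sub_distrib, Finset.mul_sum]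
      _ = 2 * ((∑ i, ∑ j, A i j * x i ^ 2) - ∑ i, ∑ j, A i j * (x i * x j)) := by
          rw [hswap]; ring
      _ = 2 * (x ⬝ᵥ ((Matrix.diagonal d - A) *ᵥ x)) := by rw [hexp]
      _ = 0 := by rw [h0]; ring
  have hterm : ∀ i j, A i j ≠ 0 → x i = x j := by
    intro i j hij
    have h1 : ∀ i ∈ Finset.univ, (0:ℝ) ≤ ∑ j, A i j * (x i - x j)^2 :=
      fun i _ => Finset.sum_nonneg fun j _ => mul_nonneg (hnn i j) (sq_nonneg _)
    have h2 := (Finset.sum_eq_zero_iff_of_nonneg h1).mp hquad i (Finset.mem_univ i)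
    have h3 : ∀ j ∈ Finset.univ, (0:ℝ) ≤ A i j * (x i - x j)^2 :=
      fun j _ => mul_nonneg (hnn i j) (sq_nonneg _)
    have h4 := (Finset.sum_eq_zero_iff_of_nonneg h3).mp h2 j (Finset.mem_univ j)
    rcases mul_eq_zero.mp h4 with h | h
    · exact absurd h hij
    · have := pow_eq_zero_iff (n := 2) (by norm_num) |>.mp h
      linarith [sub_eq_zero.mp this]
  rcases Nat.eq_zero_or_pos n with hn | hn
  · subst hn; exact ⟨0, funext fun i => i.elim0⟩
  · have key : ∀ a b : Fin n, Relation.ReflTransGen (fun a b => A a b ≠ 0) a b → x a = x b := by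
      intro a b h
      induction h with
      | refl => rfl
      | tail hab hbc ih => rw [ih]; exact hterm _ _ hbc
    exact ⟨x ⟨0, hn⟩, funext fun i => key i ⟨0, hn⟩ (hconn i _)⟩

end Aux
/-- `L† = Mι L* Mι` for a connected weighted graph, `Mι = I - n⁻¹ ιι'`. -/
theorem stmt15 {n : ℕ} (A : Matrix (Fin n) (Fin n) ℝ) (hsym : Aᵀ = A)
    (hnn : ∀ i j, 0 ≤ A i j) (hdiag : ∀ i, A i i = 0)
    (d : Fin n → ℝ) (hdeg : ∀ i, d i = ∑ j, A i j) (hdpos : ∀ i, 0 < d i)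
    (hconn : Conn A) :
    mpinv (Matrix.diagonal d - A) =
      (1 - ((n : ℝ))⁻¹ • vecMulVec (fun _ => (1 : ℝ)) (fun _ => (1 : ℝ)))
      * gstar d (Matrix.diagonal d - A)
      * (1 - ((n : ℝ))⁻¹ • vecMulVec (fun _ => (1 : ℝ)) (fun _ => (1 : ℝ))) := by
  rcases Nat.eq_zero_or_pos n with hn0 | hn0
  · subst hn0
    ext i j
    exact i.elim0
  have hnne : ((n : ℝ)) ≠ 0 := Nat.cast_ne_zero.mpr hn0.ne'
  set ι : Fin n → ℝ := fun _ => (1 : ℝ) with hιdef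
  set L : Matrix (Fin n) (Fin n) ℝ := Matrix.diagonal d - A with hLdef
  set E : Matrix (Fin n) (Fin n) ℝ := dhalfInv d with hEdef
  set v : Fin n → ℝ := fun i => Real.sqrt (d i) with hvdef
  set F : Matrix (Fin n) (Fin n) ℝ := Matrix.diagonal v with hFdef
  set S : Matrix (Fin n) (Fin n) ℝ := E * L * E with hSdef
  set Sd : Matrix (Fin n) (Fin n) ℝ := mpinv S with hSddef
  set s : ℝ := ∑ i, d i with hsdef
  set Q : Matrix (Fin n) (Fin n) ℝ := 1 - ((n : ℝ))⁻¹ • vecMulVec ι ι with hQdef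
  have hGdef : gstar d L = E * Sd * E := rfl
  rw [hGdef]
  -- basic facts
  have hvpos : ∀ i, 0 < v i := fun i => Real.sqrt_pos.mpr (hdpos i)
  have hvv : ∀ i, v i * v i = d i := fun i => Real.mul_self_sqrt (hdpos i).le
  have hspos : 0 < s := Finset.sum_pos (fun i _ => hdpos i) ⟨⟨0, hn0⟩, Finset.mem_univ _⟩
  have hsne : s ≠ 0 := hspos.ne'
  have hEF : E * F = 1 := by
    rw [hEdef, hFdef, dhalfInv, hvdef, Matrix.diagonal_mul_diagonal]
    have h1 : (fun i => 1 / Real.sqrt (d i) * Real.sqrt (d i)) = (fun _ => (1:ℝ)) :=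
      funext fun i => one_div_mul_cancel (Real.sqrt_pos.mpr (hdpos i)).ne'
    rw [h1, Matrix.diagonal_one]
  have hFE : F * E = 1 := by
    rw [hEdef, hFdef, dhalfInv, hvdef, Matrix.diagonal_mul_diagonal]
    have h1 : (fun i => Real.sqrt (d i) * (1 / Real.sqrt (d i))) = (fun _ => (1:ℝ)) :=
      funext fun i => mul_one_div_cancel (Real.sqrt_pos.mpr (hdpos i)).ne'
    rw [h1, Matrix.diagonal_one]
  have hLsym : Lᵀ = L := by
    rw [hLdef, Matrix.transpose_sub, Matrix.diagonal_transpose, hsym]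
  have hEsym : Eᵀ = E := by rw [hEdef, dhalfInv, Matrix.diagonal_transpose]
  have hSsym : Sᵀ = S := by
    rw [hSdef, Matrix.transpose_mul, Matrix.transpose_mul, hEsym, hLsym, Matrix.mul_assoc]
  have hLrec : F * S * F = L := by
    rw [hSdef, show F * (E * L * E) * F = ((F * E) * L) * (E * F) from by
      simp only [Matrix.mul_assoc], hFE, hEF, Matrix.one_mul, Matrix.mul_one]
  have hLι : L *ᵥ ι = 0 := by
    funext i
    rw [hLdef, Matrix.sub_mulVec, Pi.sub_apply, Matrix.mulVec_diagonal]
    simp [Matrix.mulVec, dotProduct, hιdef, ← hdeg i]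
  have hιL : ι ᵥ* L = 0 := by
    rw [← hLsym, Matrix.vecMul_transpose, hLι]
  have hEv : E *ᵥ v = ι := by
    funext i
    simp only [hEdef, dhalfInv, Matrix.mulVec_diagonal, hvdef, hιdef]
    field_simp [(Real.sqrt_pos.mpr (hdpos i)).ne']
  have hFι : F *ᵥ ι = v := by
    funext i
    simp [hFdef, Matrix.mulVec_diagonal, hιdef]
  have hFv : F *ᵥ v = d := by
    funext i
    simp [hFdef, Matrix.mulVec_diagonal, hvv i]
  have hvE : v ᵥ* E = ι := by
    funext i
    simp only [hEdef, dhalfInv, Matrix.vecMul_diagonal, hvdef, hιdef]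
    field_simp [(Real.sqrt_pos.mpr (hdpos i)).ne']
  -- Penrose properties of Sd
  obtain ⟨p1, p2, p3, p4⟩ := mpinv_penrose S hSsym
  have hSdsym : Sdᵀ = Sd := by
    refine penrose_unique (M := S) ⟨?_, ?_, ?_, ?_⟩ (mpinv_penrose S hSsym)
    · have key : S * Sdᵀ * S = (S * Sd * S)ᵀ := by
        conv_rhs => rw [Matrix.transpose_mul (S * Sd) S, Matrix.transpose_mul S Sd]
        rw [hSsym, Matrix.mul_assoc S Sdᵀ S]
      rw [key, p1, hSsym]
    · have key2 : Sdᵀ * S * Sdᵀ = (Sd * S * Sd)ᵀ := by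
        conv_rhs => rw [Matrix.transpose_mul (Sd * S) Sd, Matrix.transpose_mul Sd S]
        rw [hSsym, Matrix.mul_assoc Sdᵀ S Sdᵀ]
      rw [key2, p2]
    · have hx : S * Sdᵀ = (Sd * S)ᵀ := by rw [Matrix.transpose_mul, hSsym]
      rw [hx, Matrix.transpose_transpose]
      exact p4.symm
    · have hy : Sdᵀ * S = (S * Sd)ᵀ := by rw [Matrix.transpose_mul, hSsym]
      rw [hy, Matrix.transpose_transpose]
      exact p3.symm
  have hPs : S * Sd = Sd * S := by
    conv_lhs => rw [← p3]
    rw [Matrix.transpose_mul, hSdsym, hSsym]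
  -- kernel of S
  have hE0 : ∀ z : Fin n → ℝ, E *ᵥ z = 0 → z = 0 := by
    intro z hz
    funext i
    have h2 : (1 / Real.sqrt (d i)) * z i = 0 := by
      have := congrFun hz i
      rwa [hEdef, dhalfInv, Matrix.mulVec_diagonal, Pi.zero_apply] at this
    exact (mul_eq_zero.mp h2).resolve_left
      (one_div_ne_zero (Real.sqrt_pos.mpr (hdpos i)).ne')
  have hker : ∀ w : Fin n → ℝ, S *ᵥ w = 0 → ∃ c : ℝ, w = c • v := by
    intro w hw
    have hLz : L *ᵥ (E *ᵥ w) = 0 := by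
      apply hE0
      rw [Matrix.mulVec_mulVec, Matrix.mulVec_mulVec, ← hSdef]
      exact hw
    rw [hLdef] at hLz
    obtain ⟨c, hc⟩ := lap_kernel A hsym hnn d hdeg hconn (E *ᵥ w) hLz
    refine ⟨c, ?_⟩
    have hw2 : w = F *ᵥ (E *ᵥ w) := by rw [Matrix.mulVec_mulVec, hFE, Matrix.one_mulVec]
    rw [hw2, hc]
    funext i
    simp [hFdef, Matrix.mulVec_diagonal, mul_comm]
  -- the projector identity
  have h1Psym : (1 - S * Sd)ᵀ = 1 - S * Sd := by
    rw [Matrix.transpose_sub, Matrix.transpose_one, p3]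
  have hSP : S * (1 - S * Sd) = 0 := by
    rw [mul_sub, mul_one, hPs, ← Matrix.mul_assoc, p1, sub_self]
  have hSv : S *ᵥ v = 0 := by
    rw [hSdef, ← Matrix.mulVec_mulVec, hEv, ← Matrix.mulVec_mulVec, hLι, Matrix.mulVec_zero]
  have hPv : (1 - S * Sd) *ᵥ v = v := by
    rw [Matrix.sub_mulVec, Matrix.one_mulVec, hPs, ← Matrix.mulVec_mulVec, hSv,
      Matrix.mulVec_zero, sub_zero]
  have hcol : ∀ j, ∃ c : ℝ, (fun i => (1 - S * Sd) i j) = c • v := by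
    intro j
    apply hker
    have hcoleq : S *ᵥ (fun i => (1 - S * Sd) i j) = fun i => (S * (1 - S * Sd)) i j := by
      funext i
      simp [Matrix.mulVec, Matrix.mul_apply, dotProduct]
    rw [hcoleq, hSP]
    rfl
  choose c hc using hcol
  have hcc : ∀ i j, (1 - S * Sd) i j = c j * v i := by
    intro i j
    have := congrFun (hc j) i
    simpa using this
  have hcsym : ∀ i j, c j * v i = c i * v j := by
    intro i j
    rw [← hcc i j, ← hcc j i]
    conv_lhs => rw [← h1Psym]
    exact Matrix.transpose_apply _ i j
  have hcval : ∀ i, v i = c i * s := by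
    intro i
    have h2 : (∑ j, (1 - S * Sd) i j * v j) = v i := congrFun hPv i
    calc v i = ∑ j, (1 - S * Sd) i j * v j := h2.symm
      _ = ∑ j, c i * (v j * v j) := by
          refine Finset.sum_congr rfl fun j _ => ?_
          rw [hcc i j, hcsym i j]
          ring
      _ = c i * s := by
          rw [← Finset.mul_sum]
          congr 1
          rw [hsdef]
          exact Finset.sum_congr rfl fun j _ => hvv j
  have hPproj : (1 : Matrix (Fin n) (Fin n) ℝ) - S * Sd = s⁻¹ • vecMulVec v v := by
    ext i j
    rw [Matrix.smul_apply, Matrix.vecMulVec_apply, hcc i j, smul_eq_mul]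
    have hvj := hcval j
    field_simp
    rw [hvj]
    ring
  -- main multiplication identities
  have hSSd : S * Sd = 1 - s⁻¹ • vecMulVec v v := by rw [← hPproj, sub_sub_cancel]
  have hLG : L * (E * Sd * E) = 1 - s⁻¹ • vecMulVec d ι := by
    calc L * (E * Sd * E) = F * (S * Sd) * E := by
          rw [← hLrec]
          simp only [Matrix.mul_assoc]
          rw [← Matrix.mul_assoc F E (Sd * E), hFE, Matrix.one_mul]
      _ = F * (1 - s⁻¹ • vecMulVec v v) * E := by rw [hSSd]
      _ = F * E - s⁻¹ • (F * vecMulVec v v * E) := by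
          rw [mul_sub, Matrix.mul_one, Matrix.sub_mul]
          congr 1
          rw [Matrix.mul_smul, Matrix.smul_mul]
      _ = 1 - s⁻¹ • vecMulVec d ι := by
          rw [hFE, mul_vmv, hFv, vmv_mul, hvE]
  have hGsym : (E * Sd * E)ᵀ = E * Sd * E := by
    rw [Matrix.transpose_mul, Matrix.transpose_mul, hEsym, hSdsym, Matrix.mul_assoc]
  have hGL : (E * Sd * E) * L = 1 - s⁻¹ • vecMulVec ι d := by
    rw [show (E * Sd * E) * L = (L * (E * Sd * E))ᵀ from by
        rw [Matrix.transpose_mul, hGsym, hLsym],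
      hLG, Matrix.transpose_sub, Matrix.transpose_one, Matrix.transpose_smul, vmv_transpose]
  -- Q identities
  have hιι : ι ⬝ᵥ ι = (n : ℝ) := by simp [dotProduct, hιdef]
  have hvmv0l : ∀ w : Fin n → ℝ, vecMulVec (0 : Fin n → ℝ) w = 0 := by
    intro w; ext i j; simp [Matrix.vecMulVec_apply]
  have hvmv0r : ∀ w : Fin n → ℝ, vecMulVec w (0 : Fin n → ℝ) = 0 := by
    intro w; ext i j; simp [Matrix.vecMulVec_apply]
  have hXQ : vecMulVec ι ι * Q = 0 := by
    rw [hQdef, mul_sub, Matrix.mul_one, Matrix.mul_smul, vmv_mul_vmv, hιι, smul_smul,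
      inv_mul_cancel₀ hnne, one_smul, sub_self]
  have hDQ : vecMulVec d ι * Q = 0 := by
    rw [hQdef, mul_sub, Matrix.mul_one, Matrix.mul_smul, vmv_mul_vmv, hιι, smul_smul,
      inv_mul_cancel₀ hnne, one_smul, sub_self]
  have hQD : Q * vecMulVec ι d = 0 := by
    rw [hQdef, Matrix.sub_mul, Matrix.one_mul, Matrix.smul_mul, vmv_mul_vmv, hιι, smul_smul,
      inv_mul_cancel₀ hnne, one_smul, sub_self]
  have hQQ : Q * Q = Q := by
    nth_rewrite 1 [hQdef]
    rw [Matrix.sub_mul, Matrix.one_mul, Matrix.smul_mul, hXQ, smul_zero, sub_zero]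
  have hQsym : Qᵀ = Q := by
    rw [hQdef, Matrix.transpose_sub, Matrix.transpose_one, Matrix.transpose_smul, vmv_transpose]
  have hLQ : L * Q = L := by
    rw [hQdef, mul_sub, Matrix.mul_one, Matrix.mul_smul, mul_vmv, hLι, hvmv0l, smul_zero,
      sub_zero]
  have hQL : Q * L = L := by
    rw [hQdef, Matrix.sub_mul, Matrix.one_mul, Matrix.smul_mul, vmv_mul, hιL, hvmv0r,
      smul_zero, sub_zero]
  have hLGQ : (1 - s⁻¹ • vecMulVec d ι) * Q = Q := by
    rw [Matrix.sub_mul, Matrix.one_mul, Matrix.smul_mul, hDQ, smul_zero, sub_zero]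
  have hQGL : Q * (1 - s⁻¹ • vecMulVec ι d) = Q := by
    rw [mul_sub, Matrix.mul_one, Matrix.mul_smul, hQD, smul_zero, sub_zero]
  have hLN : L * (Q * (E * Sd * E) * Q) = Q := by
    rw [show L * (Q * (E * Sd * E) * Q) = ((L * Q) * (E * Sd * E)) * Q from by
      simp only [Matrix.mul_assoc], hLQ, hLG, hLGQ]
  have hNL : (Q * (E * Sd * E) * Q) * L = Q := by
    rw [show (Q * (E * Sd * E) * Q) * L = Q * ((E * Sd * E) * (Q * L)) from by
      simp only [Matrix.mul_assoc], hQL, hGL, hQGL]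
  apply mpinv_eq
  refine ⟨?_, ?_, ?_, ?_⟩
  · rw [hLN, hQL]
  · rw [hNL]
    rw [show Q * (Q * (E * Sd * E) * Q) = ((Q * Q) * (E * Sd * E)) * Q from by
      simp only [Matrix.mul_assoc], hQQ]
  · rw [hLN, hQsym]
  · rw [hNL, hQsym]
end

section
/- Cauchy–Schwarz degree inequality: for a symmetric nonnegative matrix A with row sums d_j = Σ_k A_{jk} > 0, one has Σ_{j,k} A_{jk}/(d_j d_k) ≤ Σ_j 1/d_j. -/
open Matrix BigOperators

/-!
For a symmetric nonnegative `A` the Laplacian `diag d - A` is positive semidefinite, since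
`xᵀ (diag d - A) x = ½ ∑ⱼₖ Aⱼₖ (xⱼ - xₖ)²`. Evaluating its quadratic form at `x = d⁻¹` gives the
inequality.
-/

namespace Matrix

theorem sum_mul_sq_right_eq_left_of_transpose_eq {ι R : Type*} [Fintype ι] [Semiring R]
    {A : Matrix ι ι R} (hA : Aᵀ = A) (x : ι → R) :
    ∑ j, ∑ k, A j k * x k ^ 2 = ∑ j, ∑ k, A j k * x j ^ 2 := by
  rw [Finset.sum_comm]
  refine Finset.sum_congr rfl fun j _ => Finset.sum_congr rfl fun k _ => ?_
  rw [← transpose_apply A j k, hA]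

theorem sum_mul_mul_le_sum_rowSum_mul_sq {ι R : Type*} [Fintype ι] [Field R] [LinearOrder R]
    [IsStrictOrderedRing R] {A : Matrix ι ι R} (hA : Aᵀ = A)
    (hnn : ∀ j k, 0 ≤ A j k) (x : ι → R) :
    ∑ j, ∑ k, A j k * (x j * x k) ≤ ∑ j, (∑ k, A j k) * x j ^ 2 := by
  have amgm : ∀ j k, A j k * (x j * x k) ≤ (A j k * x j ^ 2 + A j k * x k ^ 2) / 2 :=
    fun j k => by nlinarith [mul_nonneg (hnn j k) (sq_nonneg (x j - x k))]
  calc ∑ j, ∑ k, A j k * (x j * x k)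
      ≤ ∑ j, ∑ k, (A j k * x j ^ 2 + A j k * x k ^ 2) / 2 :=
        Finset.sum_le_sum fun j _ => Finset.sum_le_sum fun k _ => amgm j k
    _ = (∑ j, ∑ k, A j k * x j ^ 2 + ∑ j, ∑ k, A j k * x k ^ 2) / 2 := by
        simp only [← Finset.sum_div, Finset.sum_add_distrib]
    _ = ∑ j, (∑ k, A j k) * x j ^ 2 := by
        rw [sum_mul_sq_right_eq_left_of_transpose_eq hA, add_self_div_two]
        simp only [Finset.sum_mul]

end Matrix

theorem stmt17_general {n : ℕ} (A : Matrix (Fin n) (Fin n) ℝ) (hsym : Aᵀ = A)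
    (hnn : ∀ i j, 0 ≤ A i j)
    (d : Fin n → ℝ) (hdeg : ∀ i, d i = ∑ j, A i j) :
    ∑ j, ∑ k, A j k / (d j * d k) ≤ ∑ j, (d j)⁻¹ := by
  have key := sum_mul_mul_le_sum_rowSum_mul_sq hsym hnn fun j => (d j)⁻¹
  simp only [← hdeg] at key
  simp only [div_eq_mul_inv, mul_inv]
  refine key.trans_eq (Finset.sum_congr rfl fun j _ => ?_)
  -- `d * (d⁻¹)² = d⁻¹` holds also at `d = 0`, where both sides are `0`.
  rcases eq_or_ne (d j) 0 with h | h
  · simp [h]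
  · field_simp

/-- Cauchy–Schwarz degree inequality
`Σⱼₖ Aⱼₖ/(dⱼdₖ) ≤ Σⱼ 1/dⱼ`. -/
theorem stmt17 {n : ℕ} (A : Matrix (Fin n) (Fin n) ℝ) (hsym : Aᵀ = A)
    (hnn : ∀ i j, 0 ≤ A i j)
    (d : Fin n → ℝ) (hdeg : ∀ i, d i = ∑ j, A i j) (hdpos : ∀ i, 0 < d i) :
    ∑ j, ∑ k, A j k / (d j * d k) ≤ ∑ j, (d j)⁻¹ :=
  stmt17_general A hsym hnn d hdeg
end
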